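/- Let R be a ring and K, G ∈ R such that 1 - K*G is invertible (hence 1 - G*K is invertible). Define W = (1-GK)⁻¹, X = (1-GK)⁻¹G, Y = (1-KG)⁻¹K, Z = (1-KG)⁻¹. Then Z - K*X = 1 and Y - K*W = 0. -/
import Mathlib

private lemma isUnit_one_sub_swap {R : Type*} [Ring R] {x y : R}
    (h : IsUnit (1 - x * y)) : IsUnit (1 - y * x) := by
  refine ⟨⟨1 - y * x, 1 + y * h.unit.inv * x, ?_, ?_⟩, rfl⟩
  · calc
      (1 - y * x) * (1 + y * (IsUnit.unit h).inv * x) =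
          1 - y * x + y * ((1 - x * y) * h.unit.inv) * x := by noncomm_ring
      _ = 1 := by simp only [Units.inv_eq_val_inv, IsUnit.mul_val_inv, mul_one, sub_add_cancel]
  · calc
      (1 + y * (IsUnit.unit h).inv * x) * (1 - y * x) =
          1 - y * x + y * (h.unit.inv * (1 - x * y)) * x := by noncomm_ring
      _ = 1 := by simp only [Units.inv_eq_val_inv, IsUnit.val_inv_mul, mul_one, sub_add_cancel]

theorem dual_iop_affine_first {R : Type*} [Ring R] (G K : R) (h : IsUnit (1 - K * G))
    (W X Y Z : R)
    (hW : W = Ring.inverse (1 - G * K)) (hX : X = Ring.inverse (1 - G * K) * G)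
    (hY : Y = Ring.inverse (1 - K * G) * K) (hZ : Z = Ring.inverse (1 - K * G)) :
    Z - K * X = 1 ∧ Y - K * W = 0 := by
  have hG : IsUnit (1 - G * K) := isUnit_one_sub_swap h
  have key : Ring.inverse (1 - K * G) * K = K * Ring.inverse (1 - G * K) := by
    have e : (1 - K * G) * K = K * (1 - G * K) := by noncomm_ring
    have := congrArg (fun t => Ring.inverse (1 - K * G) * t * Ring.inverse (1 - G * K)) e
    simp only [mul_assoc] at this
    rw [Ring.mul_inverse_cancel _ hG, mul_one, ← mul_assoc,
      Ring.inverse_mul_cancel _ h, one_mul] at this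
    exact this.symm
  constructor
  · rw [hZ, hX, ← mul_assoc, ← key, mul_assoc]
    calc Ring.inverse (1 - K * G) - Ring.inverse (1 - K * G) * (K * G)
        = Ring.inverse (1 - K * G) * (1 - K * G) := by noncomm_ring
      _ = 1 := Ring.inverse_mul_cancel _ h
  · rw [hY, hW, key, sub_self]
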